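/- arXiv:2507.01665 — 5 statements merged into one kernel-verified Lean document; each statement's English description precedes it below -/
import Mathlib

section
/- Let s, x0, x1, x be nonzero elements of a field with q = s^2, such that x^2 ≠ 1, (1/x)^2 ≠ 1 substitutions are valid, x ≠ s^{±1}, s x ≠ 1, x/s ≠ 1. Define ω(y) = y(1 + s y)/(s(1 - y^2)(1 - s y)) and ch(y) = y + 1/y. Then the following rational identity holds: Σ_{ε ∈ {+1,-1}} ω(x^ε) · ( -x^{-ε}(x0 + s x^ε / x0)(x1 + s x^ε / x1) + s·ch(x0)·ch(x1) ) = -( x0 x1 / s + s/(x0 x1) ). -/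
/-- weight function of the genus-two skein algebra difference operators -/
def skeinOmega {K : Type*} [Field K] (s y : K) : K :=
  y * (1 + s * y) / (s * (1 - y ^ 2) * (1 - s * y))

theorem skeinOmega_inv {K : Type*} [Field K] (s x : K) :
    skeinOmega s x⁻¹ = x * (x + s) / (s * (x ^ 2 - 1) * (x - s)) := by
  rcases eq_or_ne x 0 with rfl | hx
  · simp [skeinOmega]
  rw [skeinOmega, ← mul_div_mul_right _ _ (pow_ne_zero 3 hx)]
  congr 1 <;> field_simp

theorem stmt_3_general {K : Type*} [Field K] (s x0 x1 x : K) (hs : s ≠ 0)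
    (hx0 : x0 ≠ 0) (hx1 : x1 ≠ 0) (hx : x ≠ 0) (h1 : x ^ 2 ≠ 1)
    (h2 : x ≠ s) (h4 : s * x ≠ 1) :
    skeinOmega s x * (-(1 / x) * (x0 + s * x / x0) * (x1 + s * x / x1)
        + s * (x0 + 1 / x0) * (x1 + 1 / x1))
      + skeinOmega s (1 / x) * (-x * (x0 + s * (1 / x) / x0) * (x1 + s * (1 / x) / x1)
        + s * (x0 + 1 / x0) * (x1 + 1 / x1))
    = -(x0 * x1 / s + s / (x0 * x1)) := by
  have hx2 : x ^ 2 - 1 ≠ 0 := sub_ne_zero.mpr h1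
  have hxs : x - s ≠ 0 := sub_ne_zero.mpr h2
  have hsx : 1 - x * s ≠ 0 := by rwa [sub_ne_zero, ne_comm, mul_comm]
  -- after this rewrite every denominator is a product of the factors shown nonzero above
  rw [one_div x, skeinOmega_inv, skeinOmega]
  field_simp
  ring

theorem stmt_3 {K : Type*} [Field K] (s q x0 x1 x : K) (hs : s ≠ 0) (hsq : s ^ 2 = q)
    (hx0 : x0 ≠ 0) (hx1 : x1 ≠ 0) (hx : x ≠ 0) (h1 : x ^ 2 ≠ 1)
    (h2 : x ≠ s) (h3 : x ≠ s⁻¹) (h4 : s * x ≠ 1) :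
    skeinOmega s x * (-(1 / x) * (x0 + s * x / x0) * (x1 + s * x / x1)
        + s * (x0 + 1 / x0) * (x1 + 1 / x1))
      + skeinOmega s (1 / x) * (-x * (x0 + s * (1 / x) / x0) * (x1 + s * (1 / x) / x1)
        + s * (x0 + 1 / x0) * (x1 + 1 / x1))
    = -(x0 * x1 / s + s / (x0 * x1)) :=
  stmt_3_general s x0 x1 x hs hx0 hx1 hx h1 h2 h4
end

section
/- Let s, x0, x1 be nonzero elements of a field with q = s^2, q ≠ 1, x0^2 x1^2 ≠ q^2, and let β0 = s^{-1}·( (1-q)(1 - q/x0^2)(1 - q/x1^2)/(1 - q^2/(x0^2 x1^2)) - 1 ) - s. Define P1(x) = x + 1/x - β0, and let ω(y) = y(1+s y)/(s(1-y^2)(1-s y)). Then for all x avoiding the poles: Σ_{ε ∈ {+1,-1}} ω(x^ε)·( -x^{-ε}(x0 + s x^ε/x0)(x1 + s x^ε/x1)·P1(q^ε x) + s(x0 + 1/x0)(x1 + 1/x1)·P1(x) ) = -( x0 x1/s^3 + s^3/(x0 x1) )·P1(x). -/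
section

variable {K : Type*} [Field K]

/-- The reduced Askey–Wilson operator `ch(T₁ T₀)` at the parameter point `t⋆`, with `q = s ^ 2`. -/
def askeyWilsonOp (s x0 x1 : K) (f : K → K) (x : K) : K :=
  skeinOmega s x * (-(1 / x) * (x0 + s * x / x0) * (x1 + s * x / x1) * f (s ^ 2 * x)
      + s * (x0 + 1 / x0) * (x1 + 1 / x1) * f x)
    + skeinOmega s (1 / x) * (-x * (x0 + s * (1 / x) / x0) * (x1 + s * (1 / x) / x1) * f (x / s ^ 2)
      + s * (x0 + 1 / x0) * (x1 + 1 / x1) * f x)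

def askeyWilsonEigenvalue (s x0 x1 : K) (n : ℕ) : K :=
  -(x0 * x1 / s ^ (2 * n + 1) + s ^ (2 * n + 1) / (x0 * x1))

lemma askeyWilsonOp_sub_const (s x0 x1 b x : K) (f : K → K) :
    askeyWilsonOp s x0 x1 (fun y => f y - b) x
      = askeyWilsonOp s x0 x1 f x - b * askeyWilsonOp s x0 x1 (fun _ => 1) x := by
  unfold askeyWilsonOp; ring

lemma askeyWilsonOp_one (s x0 x1 x : K) (hs : s ≠ 0) (hx0 : x0 ≠ 0) (hx1 : x1 ≠ 0)
    (hx : x ≠ 0) (hx2 : x ^ 2 ≠ 1) (hxs : x ≠ s) (hsx : s * x ≠ 1) :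
    askeyWilsonOp s x0 x1 (fun _ => 1) x = askeyWilsonEigenvalue s x0 x1 0 := by
  have : 1 - x ^ 2 ≠ 0 := sub_ne_zero.mpr hx2.symm
  have : 1 - x * s ≠ 0 := sub_ne_zero.mpr (mul_comm s x ▸ hsx).symm
  have : x - s ≠ 0 := sub_ne_zero.mpr hxs
  unfold askeyWilsonOp askeyWilsonEigenvalue skeinOmega
  field_simp
  ring

lemma askeyWilsonOp_ch (s x0 x1 x : K) (hs : s ≠ 0) (hx0 : x0 ≠ 0) (hx1 : x1 ≠ 0)
    (hx : x ≠ 0) (hx2 : x ^ 2 ≠ 1) (hxs : x ≠ s) (hsx : s * x ≠ 1) :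
    askeyWilsonOp s x0 x1 (fun y => y + 1 / y) x
      = askeyWilsonEigenvalue s x0 x1 1 * (x + 1 / x)
        - (1 - s ^ 2) * (2 * (x0 * x1 - s ^ 2 / (x0 * x1)) + (1 - s ^ 2) * (x0 / x1 + x1 / x0))
          / s ^ 2 := by
  have : 1 - x ^ 2 ≠ 0 := sub_ne_zero.mpr hx2.symm
  have : 1 - x * s ≠ 0 := sub_ne_zero.mpr (mul_comm s x ▸ hsx).symm
  have : x - s ≠ 0 := sub_ne_zero.mpr hxs
  unfold askeyWilsonOp askeyWilsonEigenvalue skeinOmega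
  field_simp
  ring

def askeyWilsonBeta0 (s x0 x1 : K) : K :=
  s⁻¹ * ((1 - s ^ 2) * (1 - s ^ 2 / x0 ^ 2) * (1 - s ^ 2 / x1 ^ 2)
    / (1 - (s ^ 2) ^ 2 / (x0 ^ 2 * x1 ^ 2)) - 1) - s

lemma askeyWilsonBeta0_mul_eigenvalue_sub (s x0 x1 : K) (hs : s ≠ 0) (hx0 : x0 ≠ 0)
    (hx1 : x1 ≠ 0) (hden : x0 ^ 2 * x1 ^ 2 ≠ (s ^ 2) ^ 2) :
    askeyWilsonBeta0 s x0 x1 * (askeyWilsonEigenvalue s x0 x1 1 - askeyWilsonEigenvalue s x0 x1 0)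
      = (1 - s ^ 2) * (2 * (x0 * x1 - s ^ 2 / (x0 * x1)) + (1 - s ^ 2) * (x0 / x1 + x1 / x0))
          / s ^ 2 := by
  have : x0 ^ 2 * x1 ^ 2 - s ^ 4 ≠ 0 := fun h => hden (by linear_combination h)
  unfold askeyWilsonBeta0 askeyWilsonEigenvalue
  field_simp
  ring

end

theorem stmt_4_general {K : Type*} [Field K] (s q x0 x1 x : K) (hs : s ≠ 0) (hsq : s ^ 2 = q)
    (hx0 : x0 ≠ 0) (hx1 : x1 ≠ 0) (hden : x0 ^ 2 * x1 ^ 2 ≠ q ^ 2)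
    (hx : x ≠ 0) (h1 : x ^ 2 ≠ 1) (h2 : x ≠ s) (h4 : s * x ≠ 1)
    (β0 : K)
    (hβ0 : β0 = s⁻¹ * ((1 - q) * (1 - q / x0 ^ 2) * (1 - q / x1 ^ 2)
        / (1 - q ^ 2 / (x0 ^ 2 * x1 ^ 2)) - 1) - s)
    (P1 : K → K) (hP1 : ∀ y, P1 y = y + 1 / y - β0) :
    skeinOmega s x * (-(1 / x) * (x0 + s * x / x0) * (x1 + s * x / x1) * P1 (q * x)
        + s * (x0 + 1 / x0) * (x1 + 1 / x1) * P1 x)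
      + skeinOmega s (1 / x) * (-x * (x0 + s * (1 / x) / x0) * (x1 + s * (1 / x) / x1) * P1 (x / q)
        + s * (x0 + 1 / x0) * (x1 + 1 / x1) * P1 x)
    = -(x0 * x1 / s ^ 3 + s ^ 3 / (x0 * x1)) * P1 x := by
  subst hsq hβ0
  have hP1' : P1 = fun y => y + 1 / y - askeyWilsonBeta0 s x0 x1 := funext hP1
  change askeyWilsonOp s x0 x1 P1 x = askeyWilsonEigenvalue s x0 x1 1 * P1 x
  rw [hP1', askeyWilsonOp_sub_const, askeyWilsonOp_one s x0 x1 x hs hx0 hx1 hx h1 h2 h4,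
    askeyWilsonOp_ch s x0 x1 x hs hx0 hx1 hx h1 h2 h4,
    ← askeyWilsonBeta0_mul_eigenvalue_sub s x0 x1 hs hx0 hx1 hden]
  ring

theorem stmt_4 {K : Type*} [Field K] (s q x0 x1 x : K) (hs : s ≠ 0) (hsq : s ^ 2 = q)
    (hq1 : q ≠ 1) (hx0 : x0 ≠ 0) (hx1 : x1 ≠ 0) (hden : x0 ^ 2 * x1 ^ 2 ≠ q ^ 2)
    (hx : x ≠ 0) (h1 : x ^ 2 ≠ 1) (h2 : x ≠ s) (h3 : x ≠ s⁻¹) (h4 : s * x ≠ 1)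
    (β0 : K)
    (hβ0 : β0 = s⁻¹ * ((1 - q) * (1 - q / x0 ^ 2) * (1 - q / x1 ^ 2)
        / (1 - q ^ 2 / (x0 ^ 2 * x1 ^ 2)) - 1) - s)
    (P1 : K → K) (hP1 : ∀ y, P1 y = y + 1 / y - β0) :
    skeinOmega s x * (-(1 / x) * (x0 + s * x / x0) * (x1 + s * x / x1) * P1 (q * x)
        + s * (x0 + 1 / x0) * (x1 + 1 / x1) * P1 x)
      + skeinOmega s (1 / x) * (-x * (x0 + s * (1 / x) / x0) * (x1 + s * (1 / x) / x1) * P1 (x / q)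
        + s * (x0 + 1 / x0) * (x1 + 1 / x1) * P1 x)
    = -(x0 * x1 / s ^ 3 + s ^ 3 / (x0 * x1)) * P1 x :=
  stmt_4_general s q x0 x1 x hs hsq hx0 hx1 hden hx h1 h2 h4 β0 hβ0 P1 hP1
end

section
/- Let s, x0, x1, x be nonzero elements of a field with q = s^2, q ≠ 1, and all denominators below nonzero. Define ω(y) = y(1 + s y)/(s(1 - y^2)(1 - s y)), b(t, y) = (s y + t^2)(s^3 y + t^2)/(q y), c(t, y) = (s y + t^2)(s + y t^2)/(s y), and β0 = s^{-1}·( (1-q)(1 - q/x0^2)(1 - q/x1^2)/(1 - q^2/(x0^2 x1^2)) - 1 ) - s. Then: ω(x)·( b(x0,x) b(x1,x) - c(x0,x) c(x1,x) ) + ω(1/x)·( b(x0,1/x) b(x1,1/x) - c(x0,x) c(x1,x) ) = s^{-5} (x0^2 x1^2 - q^2)^2 · ( x + 1/x - β0 ). -/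
section
variable {K : Type*} [Field K] {s x : K}

def skeinB (s t y : K) : K := (s * y + t ^ 2) * (s ^ 3 * y + t ^ 2) / (s ^ 2 * y)

def skeinC (s t y : K) : K := (s * y + t ^ 2) * (s + y * t ^ 2) / (s * y)

theorem add_one_div_sub_beta0 (hs : s ≠ 0) (hx : x ≠ 0) {a b : K} (ha : a ≠ 0) (hb : b ≠ 0)
    (hab : a * b ≠ (s ^ 2) ^ 2) :
    x + 1 / x - (s⁻¹ * ((1 - s ^ 2) * (1 - s ^ 2 / a) * (1 - s ^ 2 / b)
        / (1 - (s ^ 2) ^ 2 / (a * b)) - 1) - s)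
      = ((1 + s * x) * (x + s) * (a * b - s ^ 4) - x * (1 - s ^ 2) * (a - s ^ 2) * (b - s ^ 2))
        / (s * x * (a * b - s ^ 4)) := by
  have hab' : a * b - s ^ 4 ≠ 0 := sub_ne_zero.mpr (by rwa [← pow_mul] at hab)
  field_simp
  ring

theorem skeinOmega_mul_add_skeinOmega_one_div_mul (hs : s ≠ 0) (hx : x ≠ 0) (hx2 : x ^ 2 ≠ 1)
    (hxs : x ≠ s) (hsx : s * x ≠ 1) (t u : K) :
    skeinOmega s x * (skeinB s t x * skeinB s u x - skeinC s t x * skeinC s u x)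
      + skeinOmega s (1 / x)
        * (skeinB s t (1 / x) * skeinB s u (1 / x) - skeinC s t x * skeinC s u x)
    = (t ^ 2 * u ^ 2 - s ^ 4) * ((1 + s * x) * (x + s) * (t ^ 2 * u ^ 2 - s ^ 4)
        - x * (1 - s ^ 2) * (t ^ 2 - s ^ 2) * (u ^ 2 - s ^ 2)) / (s ^ 6 * x) := by
  -- `field_simp` normalises the factor `1 - s * x` to `1 - x * s`
  have hsx' : x * s ≠ 1 := by rwa [mul_comm]
  unfold skeinOmega skeinB skeinC
  field_simp
  ring

end

theorem stmt_12_general {K : Type*} [Field K] (s q x0 x1 x : K) (hs : s ≠ 0) (hsq : s ^ 2 = q)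
    (hx0 : x0 ≠ 0) (hx1 : x1 ≠ 0) (hx : x ≠ 0)
    (h1 : x ^ 2 ≠ 1) (h2 : x ≠ s) (h3 : s * x ≠ 1)
    (h4 : x0 ^ 2 * x1 ^ 2 ≠ q ^ 2)
    (b c : K → K → K) (β0 : K)
    (hb : ∀ t y, b t y = (s * y + t ^ 2) * (s ^ 3 * y + t ^ 2) / (q * y))
    (hc : ∀ t y, c t y = (s * y + t ^ 2) * (s + y * t ^ 2) / (s * y))
    (hβ0 : β0 = s⁻¹ * ((1 - q) * (1 - q / x0 ^ 2) * (1 - q / x1 ^ 2)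
        / (1 - q ^ 2 / (x0 ^ 2 * x1 ^ 2)) - 1) - s) :
    skeinOmega s x * (b x0 x * b x1 x - c x0 x * c x1 x)
      + skeinOmega s (1 / x) * (b x0 (1 / x) * b x1 (1 / x) - c x0 x * c x1 x)
    = (s ^ 5)⁻¹ * (x0 ^ 2 * x1 ^ 2 - q ^ 2) ^ 2 * (x + 1 / x - β0) := by
  subst hsq hβ0
  obtain rfl : b = skeinB s := funext₂ hb
  obtain rfl : c = skeinC s := funext₂ hc
  rw [skeinOmega_mul_add_skeinOmega_one_div_mul hs hx h1 h2 h3,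
    add_one_div_sub_beta0 hs hx (pow_ne_zero 2 hx0) (pow_ne_zero 2 hx1) h4]
  field_simp

theorem stmt_12 {K : Type*} [Field K] (s q x0 x1 x : K) (hs : s ≠ 0) (hsq : s ^ 2 = q)
    (hq1 : q ≠ 1) (hx0 : x0 ≠ 0) (hx1 : x1 ≠ 0) (hx : x ≠ 0)
    (h1 : x ^ 2 ≠ 1) (h2 : x ≠ s) (h3 : s * x ≠ 1)
    (h4 : x0 ^ 2 * x1 ^ 2 ≠ q ^ 2)
    (b c : K → K → K) (β0 : K)
    (hb : ∀ t y, b t y = (s * y + t ^ 2) * (s ^ 3 * y + t ^ 2) / (q * y))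
    (hc : ∀ t y, c t y = (s * y + t ^ 2) * (s + y * t ^ 2) / (s * y))
    (hβ0 : β0 = s⁻¹ * ((1 - q) * (1 - q / x0 ^ 2) * (1 - q / x1 ^ 2)
        / (1 - q ^ 2 / (x0 ^ 2 * x1 ^ 2)) - 1) - s) :
    skeinOmega s x * (b x0 x * b x1 x - c x0 x * c x1 x)
      + skeinOmega s (1 / x) * (b x0 (1 / x) * b x1 (1 / x) - c x0 x * c x1 x)
    = (s ^ 5)⁻¹ * (x0 ^ 2 * x1 ^ 2 - q ^ 2) ^ 2 * (x + 1 / x - β0) :=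
  stmt_12_general s q x0 x1 x hs hsq hx0 hx1 hx h1 h2 h3 h4 b c β0 hb hc hβ0
end

section
/- Let K = ℂ, s ≠ 0 with q = s^2, x1 ≠ 0, and define the operator T1 on functions f of the nonzero variable x (with x^2 ≠ 1) by (T1 f)(x) = i·( ((1 + s x)/(s(1 - x^2)))·((s x + x1^2)/x1)·(f(1/x) - f(x)) - (s/x1)·f(x) ). Then T1 satisfies the Iwahori–Hecke quadratic relation: for every function f and every admissible x with x^{-1} also admissible, ((T1 + i s^{-1} x1)(T1 + i s x1^{-1}) f)(x) = 0. -/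
/-- Iwahori–Hecke operator `T1` of the genus-two DAHA representation -/
noncomputable def T1op (s x1 : ℂ) (f : ℂ → ℂ) (x : ℂ) : ℂ :=
  Complex.I * (((1 + s * x) / (s * (1 - x ^ 2))) * ((s * x + x1 ^ 2) / x1) * (f (1 / x) - f x)
    - (s / x1) * f x)

theorem stmt_13 (s q x1 : ℂ) (hs : s ≠ 0) (hsq : s ^ 2 = q) (hx1 : x1 ≠ 0)
    (f : ℂ → ℂ) (x : ℂ) (hx : x ≠ 0) (h1 : x ^ 2 ≠ 1) :
    T1op s x1 (fun y => T1op s x1 f y + Complex.I * s * x1⁻¹ * f y) x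
      + Complex.I * s⁻¹ * x1 * (T1op s x1 f x + Complex.I * s * x1⁻¹ * f x) = 0 := by
  have hinv : (1 : ℂ) / (1 / x) = x := by field_simp
  have h1' : (1 : ℂ) - x ^ 2 ≠ 0 := by
    intro h; apply h1; linear_combination -h
  have h2 : (1 : ℂ) - (1 / x) ^ 2 ≠ 0 := by
    have : (1 : ℂ) - (1 / x) ^ 2 = (x ^ 2 - 1) / x ^ 2 := by field_simp
    rw [this]
    apply div_ne_zero _ (pow_ne_zero 2 hx)
    intro h; apply h1; linear_combination h
  have hP : ((1 + s * (1 / x)) / (s * (1 - (1 / x) ^ 2))) * ((s * (1 / x) + x1 ^ 2) / x1)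
      + ((1 + s * x) / (s * (1 - x ^ 2))) * ((s * x + x1 ^ 2) / x1)
      + s / x1 - x1 / s = 0 := by
    have h3 : x ^ 2 - 1 ≠ 0 := by
      intro h; apply h1; linear_combination h
    have hterm : (1 + s * (1 / x)) / (s * (1 - (1 / x) ^ 2)) * ((s * (1 / x) + x1 ^ 2) / x1)
        = (-(x + s) * (s + x1 ^ 2 * x)) / (s * (1 - x ^ 2) * x1) := by
      rw [div_mul_div_comm, div_eq_div_iff (mul_ne_zero (mul_ne_zero hs h2) hx1)
        (mul_ne_zero (mul_ne_zero hs h1') hx1)]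
      field_simp
      ring
    rw [hterm]
    field_simp
    ring
  simp only [T1op, hinv]
  linear_combination (Complex.I ^ 2 * (((1 + s * x) / (s * (1 - x ^ 2))) * ((s * x + x1 ^ 2) / x1))
    * (f x - f (1 / x))) * hP
end

section
/- Let K = ℂ, s ≠ 0 with q = s^2, x0 ≠ 0, and define the operator T0 on functions f of the nonzero variable x (with x ≠ s and q/x ≠ s as needed) by (T0 f)(x) = i·(x/(s - x))·( -((s + x·x0^2)/(x·x0))·f(q/x) + (x0 + 1/x0)·f(x) ). Then T0 satisfies the Iwahori–Hecke quadratic relation: for every function f and every admissible x, ((T0 + i x0)(T0 + i x0^{-1}) f)(x) = 0. -/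
/-!
Since `x ↦ q / x` is an involution, `T0` maps the pair `(f x, f (q / x))` through a `2 × 2`
matrix; its trace is `-i (x0 + x0⁻¹)` and its determinant is `-1 = (i x0) (i x0⁻¹)`, so the
quadratic relation is the Cayley–Hamilton identity for that matrix.
-/

/-- Iwahori–Hecke operator `T0` of the genus-two DAHA representation, with `q = s^2` -/
noncomputable def T0op (s x0 : ℂ) (f : ℂ → ℂ) (x : ℂ) : ℂ :=
  Complex.I * (x / (s - x)) * (-((s + x * x0 ^ 2) / (x * x0)) * f (s ^ 2 / x)
    + (x0 + 1 / x0) * f x)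

section ReflectionOp

variable {α R : Type*} [CommRing R]

def reflectionOp (σ : α → α) (A B : α → R) (f : α → R) (x : α) : R :=
  A x * f (σ x) + B x * f x

theorem reflectionOp_quadratic_relation {σ : α → α} {A B : α → R} {x : α} (a b : R)
    (hσ : σ (σ x) = x) (htr : B x + B (σ x) = -(a + b))
    (hdet : B x * B (σ x) - A x * A (σ x) = a * b) (f : α → R) :
    reflectionOp σ A B (fun y => reflectionOp σ A B f y + b * f y) x
      + a * (reflectionOp σ A B f x + b * f x) = 0 := by
  simp only [reflectionOp, hσ]
  linear_combination (A x * f (σ x) + B x * f x) * htr - f x * hdet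

end ReflectionOp

noncomputable def T0reflCoeff (s x0 x : ℂ) : ℂ :=
  Complex.I * (x / (s - x)) * -((s + x * x0 ^ 2) / (x * x0))

noncomputable def T0diagCoeff (s x0 x : ℂ) : ℂ :=
  Complex.I * (x / (s - x)) * (x0 + 1 / x0)

theorem T0op_eq_reflectionOp (s x0 : ℂ) :
    T0op s x0 = reflectionOp (fun x => s ^ 2 / x) (T0reflCoeff s x0) (T0diagCoeff s x0) := by
  funext f x
  simp only [T0op, reflectionOp, T0reflCoeff, T0diagCoeff]
  ring

section Coefficients

variable {s x0 x : ℂ}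

theorem T0coeff_trace (hx : x ≠ 0) (hxs : x ≠ s) :
    T0diagCoeff s x0 x + T0diagCoeff s x0 (s ^ 2 / x) = -(Complex.I * x0 + Complex.I * x0⁻¹) := by
  have hsx : s - x ≠ 0 := sub_ne_zero.mpr hxs.symm
  unfold T0diagCoeff
  field_simp
  ring

theorem T0coeff_det (hs : s ≠ 0) (hx0 : x0 ≠ 0) (hx : x ≠ 0) (hxs : x ≠ s) :
    T0diagCoeff s x0 x * T0diagCoeff s x0 (s ^ 2 / x)
      - T0reflCoeff s x0 x * T0reflCoeff s x0 (s ^ 2 / x) = Complex.I * x0 * (Complex.I * x0⁻¹) := by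
  have hsx : s - x ≠ 0 := sub_ne_zero.mpr hxs.symm
  unfold T0diagCoeff T0reflCoeff
  field_simp
  ring

end Coefficients

theorem stmt_14_general (s x0 : ℂ) (hs : s ≠ 0) (hx0 : x0 ≠ 0)
    (f : ℂ → ℂ) (x : ℂ) (hx : x ≠ 0) (h1 : x ≠ s) :
    T0op s x0 (fun y => T0op s x0 f y + Complex.I * x0⁻¹ * f y) x
      + Complex.I * x0 * (T0op s x0 f x + Complex.I * x0⁻¹ * f x) = 0 := by
  rw [T0op_eq_reflectionOp]
  exact reflectionOp_quadratic_relation _ _ (by field_simp)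
    (T0coeff_trace hx h1) (T0coeff_det hs hx0 hx h1) f

theorem stmt_14 (s q x0 : ℂ) (hs : s ≠ 0) (hsq : s ^ 2 = q) (hx0 : x0 ≠ 0)
    (f : ℂ → ℂ) (x : ℂ) (hx : x ≠ 0) (h1 : x ≠ s) :
    T0op s x0 (fun y => T0op s x0 f y + Complex.I * x0⁻¹ * f y) x
      + Complex.I * x0 * (T0op s x0 f x + Complex.I * x0⁻¹ * f x) = 0 :=
  stmt_14_general s x0 hs hx0 f x hx h1
end
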